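/- Let m ≥ 1, let (z_i)_{i∈ℕ} be an enumeration of ℤ^m in ℝ^m, let r₁ ≥ r₂ ≥ … > 0 with r₁ < 1/2, and let Ω = ⋃_{i∈ℕ} B(z_i; r_i). Then for all t > 0, the heat content satisfies H_Ω(t) ≥ (4πt)^{-m/2} e^{-r₁²/t} ω_m² ∑_{i=1}^∞ r_i^{2m}, where ω_m is the volume of the unit ball in ℝ^m. In particular, if ∑_{i=1}^∞ r_i^{2m} = ∞ then H_Ω(t) = ∞ for every t > 0. -/

import Mathlib

open MeasureTheory Metric ENNReal

/-- The heat content of an open set `Ω ⊆ ℝᵐ` at time `t`, computed with the Euclidean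
heat kernel `p(x,y;t) = (4πt)^{-m/2} e^{-|x-y|²/(4t)}`. -/
noncomputable def heatContent {m : ℕ} (Ω : Set (EuclideanSpace ℝ (Fin m))) (t : ℝ) :
    ℝ≥0∞ :=
  ∫⁻ x in Ω, ∫⁻ y in Ω,
    ENNReal.ofReal ((4 * Real.pi * t) ^ (-(m : ℝ) / 2) * Real.exp (-dist x y ^ 2 / (4 * t)))

/-- `z : ℕ → ℝᵐ` is an enumeration of the integer lattice `ℤᵐ ⊆ ℝᵐ`. -/
def IsLatticeEnum (m : ℕ) (z : ℕ → EuclideanSpace ℝ (Fin m)) : Prop :=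
  Function.Injective z ∧
    Set.range z = {x : EuclideanSpace ℝ (Fin m) | ∀ j : Fin m, ∃ k : ℤ, x j = (k : ℝ)}

/-!
The heat content is at least the sum over the balls of `∫_{B_i} ∫_{B_i} p`, since the balls are
disjoint (distinct lattice points are at distance `≥ 1 > r_i + r_j`). Two points of `B(z_i; r_i)`
are at distance `< 2 r_i ≤ 2 r₁`, so on `B_i × B_i` the kernel is at least
`(4πt)^{-m/2} e^{-r₁²/t}`, and `|B_i|² = ω_m² r_i^{2m}`.
-/

open Function

section LatticeSeparation

variable {ι : Type*} [Fintype ι]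

lemma one_le_dist_of_forall_int {x y : EuclideanSpace ℝ ι}
    (hx : ∀ j, ∃ k : ℤ, x j = k) (hy : ∀ j, ∃ k : ℤ, y j = k) (hxy : x ≠ y) :
    1 ≤ dist x y := by
  obtain ⟨j, hj⟩ : ∃ j, x j ≠ y j := by
    by_contra! h
    exact hxy (PiLp.ext h)
  obtain ⟨k, hk⟩ := hx j
  obtain ⟨l, hl⟩ := hy j
  have hkl : k - l ≠ 0 := sub_ne_zero.2 fun h => hj (by rw [hk, hl, h])
  calc (1 : ℝ) ≤ |((k - l : ℤ) : ℝ)| := by exact_mod_cast Int.one_le_abs hkl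
    _ = dist (x j) (y j) := by rw [Real.dist_eq, hk, hl, Int.cast_sub]
    _ ≤ dist x y := PiLp.dist_apply_le x y j

end LatticeSeparation

namespace IsLatticeEnum

variable {m : ℕ} {z : ℕ → EuclideanSpace ℝ (Fin m)}

lemma one_le_dist (hz : IsLatticeEnum m z) {i j : ℕ} (hij : i ≠ j) : 1 ≤ dist (z i) (z j) := by
  have hint : ∀ i, ∀ l, ∃ k : ℤ, z i l = k := fun i => by
    have h := Set.mem_range_self (f := z) i
    rwa [hz.2] at h
  exact one_le_dist_of_forall_int (hint i) (hint j) (hz.1.ne hij)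

lemma pairwise_disjoint_ball (hz : IsLatticeEnum m z) {r : ℕ → ℝ} (hr : ∀ i, r i ≤ 1 / 2) :
    Pairwise (Disjoint on fun i => ball (z i) (r i)) := fun i j hij =>
  ball_disjoint_ball <| by linarith [hr i, hr j, one_le_dist hz hij]

end IsLatticeEnum

section DoubleIntegral

variable {α ι : Type*} [MeasurableSpace α] {μ : Measure α}

lemma const_mul_measure_sq_le_setLIntegral_setLIntegral {s : Set α} (hs : MeasurableSet s)
    {f : α → α → ℝ≥0∞} {c : ℝ≥0∞} (hf : ∀ x ∈ s, ∀ y ∈ s, c ≤ f x y) :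
    c * μ s ^ 2 ≤ ∫⁻ x in s, ∫⁻ y in s, f x y ∂μ ∂μ :=
  calc c * μ s ^ 2 = ∫⁻ _ in s, ∫⁻ _ in s, c ∂μ ∂μ := by
        rw [setLIntegral_const, setLIntegral_const, sq, mul_assoc]
    _ ≤ ∫⁻ x in s, ∫⁻ y in s, f x y ∂μ ∂μ :=
        setLIntegral_mono' hs fun x hx => setLIntegral_mono' hs fun y hy => hf x hx y hy

lemma tsum_setLIntegral_setLIntegral_le_iUnion [Countable ι] {s : ι → Set α}
    (hs : ∀ i, MeasurableSet (s i)) (hd : Pairwise (Disjoint on s)) (f : α → α → ℝ≥0∞) :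
    ∑' i, ∫⁻ x in s i, ∫⁻ y in s i, f x y ∂μ ∂μ ≤
      ∫⁻ x in ⋃ i, s i, ∫⁻ y in ⋃ i, s i, f x y ∂μ ∂μ := by
  rw [lintegral_iUnion hs hd]
  exact ENNReal.tsum_le_tsum fun i =>
    lintegral_mono fun x => lintegral_mono_set (Set.subset_iUnion s i)

end DoubleIntegral

lemma exp_neg_sq_div_le_exp_neg_dist_sq_div {X : Type*} [PseudoMetricSpace X] {t R : ℝ}
    (ht : 0 < t) {x y : X} (h : dist x y ≤ 2 * R) :
    Real.exp (-R ^ 2 / t) ≤ Real.exp (-dist x y ^ 2 / (4 * t)) := by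
  have hsq : dist x y ^ 2 ≤ (2 * R) ^ 2 := pow_le_pow_left₀ dist_nonneg h 2
  rw [Real.exp_le_exp, neg_div, neg_div, neg_le_neg_iff, div_le_div_iff₀ (by positivity) ht]
  nlinarith

section HeatKernel

variable {m : ℕ}

lemma heatKernel_ge_of_mem_ball {t ρ R : ℝ} (ht : 0 < t) (hρR : ρ ≤ R)
    {c x y : EuclideanSpace ℝ (Fin m)} (hx : x ∈ ball c ρ) (hy : y ∈ ball c ρ) :
    ENNReal.ofReal ((4 * Real.pi * t) ^ (-(m : ℝ) / 2) * Real.exp (-R ^ 2 / t)) ≤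
      ENNReal.ofReal ((4 * Real.pi * t) ^ (-(m : ℝ) / 2) * Real.exp (-dist x y ^ 2 / (4 * t))) := by
  have hxy : dist x y ≤ 2 * R := by
    linarith [dist_triangle_right x y c, mem_ball.1 hx, mem_ball.1 hy]
  exact ENNReal.ofReal_le_ofReal <| mul_le_mul_of_nonneg_left
    (exp_neg_sq_div_le_exp_neg_dist_sq_div ht hxy) (by positivity)

lemma volume_ball_sq {ρ : ℝ} (hρ : 0 < ρ) (c : EuclideanSpace ℝ (Fin m)) :
    volume (ball c ρ) ^ 2 = ENNReal.ofReal (ρ ^ (2 * m)) *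
      ENNReal.ofReal ((volume (ball (0 : EuclideanSpace ℝ (Fin m)) 1)).toReal ^ 2) := by
  rw [Measure.addHaar_ball_of_pos volume c hρ, finrank_euclideanSpace_fin,
    ENNReal.ofReal_pow ENNReal.toReal_nonneg, ENNReal.ofReal_toReal measure_ball_lt_top.ne,
    pow_mul', mul_pow, ← ENNReal.ofReal_pow (by positivity)]

end HeatKernel

lemma ENNReal.tsum_ofReal_eq_top_of_not_summable {α : Type*} {f : α → ℝ} (hf : ∀ i, 0 ≤ f i)
    (hns : ¬ Summable f) : ∑' i, ENNReal.ofReal (f i) = ⊤ := by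
  by_contra h
  exact hns <| (ENNReal.summable_toReal h).congr fun i => ENNReal.toReal_ofReal (hf i)

theorem heat_content_lattice_balls_lower_bound_general
    (m : ℕ)
    (z : ℕ → EuclideanSpace ℝ (Fin m)) (hz : IsLatticeEnum m z)
    (r : ℕ → ℝ) (hrpos : ∀ i, 0 < r i) (hrdec : Antitone r)
    (hr1 : r 0 < 1 / 2)
    (Ω : Set (EuclideanSpace ℝ (Fin m))) (hΩ : Ω = ⋃ i : ℕ, ball (z i) (r i))
    (ω : ℝ) (hω : ω = (volume (ball (0 : EuclideanSpace ℝ (Fin m)) 1)).toReal) :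
    (∀ t : ℝ, 0 < t →
      ENNReal.ofReal ((4 * Real.pi * t) ^ (-(m : ℝ) / 2) *
            Real.exp (-(r 0) ^ 2 / t) * ω ^ 2) *
          (∑' i : ℕ, ENNReal.ofReal (r i ^ (2 * m)))
        ≤ heatContent Ω t) ∧
    (¬ Summable (fun i : ℕ => r i ^ (2 * m)) →
      ∀ t : ℝ, 0 < t → heatContent Ω t = ⊤) := by
  have hdisj := IsLatticeEnum.pairwise_disjoint_ball hz fun i => (hrdec i.zero_le).trans hr1.le
  have hlower : ∀ t : ℝ, 0 < t →
      ENNReal.ofReal ((4 * Real.pi * t) ^ (-(m : ℝ) / 2) *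
            Real.exp (-(r 0) ^ 2 / t) * ω ^ 2) *
          (∑' i : ℕ, ENNReal.ofReal (r i ^ (2 * m))) ≤ heatContent Ω t := fun t ht =>
    calc _ = ∑' i, ENNReal.ofReal ((4 * Real.pi * t) ^ (-(m : ℝ) / 2) *
            Real.exp (-(r 0) ^ 2 / t)) * volume (ball (z i) (r i)) ^ 2 := by
          rw [← ENNReal.tsum_mul_left]
          refine tsum_congr fun i => ?_
          rw [volume_ball_sq (hrpos i), ← hω, ENNReal.ofReal_mul (by positivity)]
          ring
      _ ≤ _ := ENNReal.tsum_le_tsum fun i =>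
          const_mul_measure_sq_le_setLIntegral_setLIntegral measurableSet_ball
            fun x hx y hy => heatKernel_ge_of_mem_ball ht (hrdec i.zero_le) hx hy
      _ ≤ heatContent Ω t := hΩ ▸ tsum_setLIntegral_setLIntegral_le_iUnion
          (fun _ => measurableSet_ball) hdisj _
  refine ⟨hlower, fun hns t ht => ?_⟩
  have hω_pos : 0 < ω := hω ▸ ENNReal.toReal_pos (measure_ball_pos volume _ one_pos).ne'
    measure_ball_lt_top.ne
  have h := hlower t ht
  rwa [ENNReal.tsum_ofReal_eq_top_of_not_summable (fun i => pow_nonneg (hrpos i).le _) hns,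
    ENNReal.mul_top (ENNReal.ofReal_pos.2 (by positivity)).ne', top_le_iff] at h

/-- For `Ω` a union of disjoint balls `B(z_i;r_i)` centred at the points of `ℤᵐ` with
decreasing radii `r₁ < 1/2`, for all `t > 0`,
`H_Ω(t) ≥ (4πt)^{-m/2} e^{-r₁²/t} ω_m² ∑ r_i^{2m}`; in particular, if `∑ r_i^{2m} = ∞`
then `H_Ω(t) = ∞` for every `t > 0`. -/
theorem heat_content_lattice_balls_lower_bound
    (m : ℕ) (hm : 1 ≤ m)
    (z : ℕ → EuclideanSpace ℝ (Fin m)) (hz : IsLatticeEnum m z)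
    (r : ℕ → ℝ) (hrpos : ∀ i, 0 < r i) (hrdec : Antitone r)
    (hr1 : r 0 < 1 / 2)
    (Ω : Set (EuclideanSpace ℝ (Fin m))) (hΩ : Ω = ⋃ i : ℕ, ball (z i) (r i))
    (ω : ℝ) (hω : ω = (volume (ball (0 : EuclideanSpace ℝ (Fin m)) 1)).toReal) :
    (∀ t : ℝ, 0 < t →
      ENNReal.ofReal ((4 * Real.pi * t) ^ (-(m : ℝ) / 2) *
            Real.exp (-(r 0) ^ 2 / t) * ω ^ 2) *
          (∑' i : ℕ, ENNReal.ofReal (r i ^ (2 * m)))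
        ≤ heatContent Ω t) ∧
    (¬ Summable (fun i : ℕ => r i ^ (2 * m)) →
      ∀ t : ℝ, 0 < t → heatContent Ω t = ⊤) :=
  heat_content_lattice_balls_lower_bound_general m z hz r hrpos hrdec hr1 Ω hΩ ω hω
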